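/- For any β ∈ ℂ and μ > 0, sup_{n ∈ ℕ} ∑_{m=0}^∞ e^{μ|√m − √n|} |⟨m|D(β)|n⟩|² < ∞. -/

import Mathlib

/-!
Conjugation by `e^{tN}` turns `D(β)` into `e^{-|β|²/2} e^{α a†} e^{-γ a}` with `α = e^t β` and
`γ = e^{-t} conj β`. In the Bargmann picture (`|n⟩ ↦ z^n / √n!`, `‖f‖² = ∑ m! |f_m|²`) the
vector `e^{-γ a}|n⟩` is `(z - γ)^n / √n!`, and `‖e^{α z} f‖² = e^{|α|²} ‖f(· + conj α)‖²`.
Hence `∑_m e^{2t(m-n)} |⟨m|D(β)|n⟩|² = e^{(e^{2t}-1)|β|²} L_n(-|β|²(e^t - e^{-t})²)`.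
For `t = ±μ/√(n+1)` the sum of these two dominates the weighted sum, because
`μ|√m - √n| ≤ 2|t| |m - n|`, and `L_n(-x) ≤ e^{nx}` with `n (e^t - e^{-t})² ≤ 4μ² e^{2μ}`
bounds both uniformly in `n`.
-/

/-- Matrix elements ⟨m|D(β)|n⟩ of the Glauber displacement operator
D(β) = exp(β b† − β* b) = e^{−|β|²/2} e^{β b†} e^{−β* b} on ℓ²(ℕ), given by the
standard explicit expansion. -/
noncomputable def Dmat (β : ℂ) (m n : ℕ) : ℂ :=
  Complex.exp (-(((‖β‖ : ℝ) : ℂ) ^ 2) / 2) *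
    ∑ k ∈ Finset.range (n + 1),
      if n - k ≤ m then
        ((-(starRingEnd ℂ) β) ^ k / (Nat.factorial k : ℂ)) *
          (β ^ (m - (n - k)) / (Nat.factorial (m - (n - k)) : ℂ)) *
          ((Real.sqrt ((Nat.factorial n : ℝ) * (Nat.factorial m : ℝ)) /
            (Nat.factorial (n - k) : ℝ) : ℝ) : ℂ)
      else 0

open Finset
open scoped Nat ComplexConjugate

lemma hasSum_choose_mul_pow_div_factorial (i : ℕ) (z : ℂ) :
    HasSum (fun s => (s.choose i : ℂ) * z ^ s / s !) (z ^ i / i ! * Complex.exp z) := by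
  rw [← hasSum_nat_add_iff' i]
  have hvanish : ∑ s ∈ range i, (s.choose i : ℂ) * z ^ s / s ! = 0 :=
    sum_eq_zero fun s hs => by simp [Nat.choose_eq_zero_of_lt (mem_range.1 hs)]
  have hshift (s : ℕ) :
      ((s + i).choose i : ℂ) * z ^ (s + i) / (s + i)! = z ^ i / i ! * (z ^ s / s !) := by
    rw [Nat.cast_choose ℂ (Nat.le_add_left i s), Nat.add_sub_cancel, pow_add]
    field_simp [Nat.factorial_ne_zero]
  simp only [hvanish, sub_zero, hshift, Complex.exp_eq_exp_ℂ]
  exact (NormedSpace.expSeries_div_hasSum_exp z).mul_left _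

lemma hasSum_factorial_div_mul_pow (p d : ℕ) (z : ℂ) :
    HasSum (fun s => ((s + p + d)! : ℂ) / ((s + d)! * s !) * z ^ s)
      (Complex.exp z *
        ∑ j ∈ range (p + 1), (j ! * p.choose j * (p + d).choose j : ℂ) * z ^ (p - j)) := by
  have hterm (s : ℕ) : ((s + p + d)! : ℂ) / ((s + d)! * s !) * z ^ s
      = ∑ ij ∈ antidiagonal p,
          (p ! * (p + d).choose ij.2 : ℂ) * ((s.choose ij.1 : ℂ) * z ^ s / s !) := by
    have hfac : ((s + p + d)! : ℂ) / ((s + d)! * s !) = p ! * (s + (p + d)).choose p / s ! := by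
      rw [Nat.cast_choose ℂ (by omega : p ≤ s + (p + d)), show s + (p + d) - p = s + d by omega,
        ← add_assoc]
      field_simp [Nat.factorial_ne_zero]
    rw [hfac, Nat.add_choose_eq, Nat.cast_sum, mul_sum, sum_div, sum_mul]
    refine sum_congr rfl fun ij _ => ?_
    push_cast
    ring
  have hval : ∑ ij ∈ antidiagonal p,
        (p ! * (p + d).choose ij.2 : ℂ) * (z ^ ij.1 / ij.1 ! * Complex.exp z)
      = Complex.exp z *
        ∑ j ∈ range (p + 1), (j ! * p.choose j * (p + d).choose j : ℂ) * z ^ (p - j) := by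
    rw [← Finset.Nat.sum_antidiagonal_swap (f := fun ij : ℕ × ℕ =>
      (p ! * (p + d).choose ij.2 : ℂ) * (z ^ ij.1 / ij.1 ! * Complex.exp z))]
    simp only [Prod.fst_swap, Prod.snd_swap]
    rw [Finset.Nat.sum_antidiagonal_eq_sum_range_succ
      (fun j i => (p ! * (p + d).choose j : ℂ) * (z ^ i / i ! * Complex.exp z)), mul_sum]
    refine sum_congr rfl fun j hj => ?_
    rw [Nat.cast_choose ℂ (Nat.lt_succ_iff.1 (mem_range.1 hj))]
    field_simp [Nat.factorial_ne_zero]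
  simp only [hterm, ← hval]
  exact hasSum_sum fun ij _ =>
    (hasSum_choose_mul_pow_div_factorial ij.1 z).mul_left (p ! * (p + d).choose ij.2 : ℂ)

lemma hasSum_mul_sum_mul_conj_sum {ι : Type*} (S : Finset ι) (w : ℕ → ℂ) (a : ι → ℕ → ℂ)
    (u : ι → ℂ) (K : ι → ι → ℂ)
    (h : ∀ i ∈ S, ∀ j ∈ S, HasSum (fun m => w m * a i m * conj (a j m)) (K i j)) :
    HasSum (fun m => w m * (∑ i ∈ S, a i m * u i) * conj (∑ i ∈ S, a i m * u i))
      (∑ i ∈ S, ∑ j ∈ S, u i * conj (u j) * K i j) := by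
  have hexpand (m : ℕ) : w m * (∑ i ∈ S, a i m * u i) * conj (∑ i ∈ S, a i m * u i)
      = ∑ i ∈ S, ∑ j ∈ S, u i * conj (u j) * (w m * a i m * conj (a j m)) := by
    simp only [map_sum, map_mul, mul_sum, sum_mul]
    rw [sum_comm]
    exact sum_congr rfl fun i _ => sum_congr rfl fun j _ => by ring
  simp only [hexpand]
  exact hasSum_sum fun i hi => hasSum_sum fun j hj => (h i hi j hj).mul_left _

/- A polynomial `U = ∑_{p ≤ n} u p z^p` is given by `n` and `u`. Then `expMul α n u m` is the
coefficient of `z^m` in `e^{α z} U(z)`, and `taylorShift a n u s` that of `z^s` in `U(z + a)`. -/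

noncomputable def expMulCoeff (α : ℂ) (p m : ℕ) : ℂ :=
  if p ≤ m then α ^ (m - p) / (m - p)! else 0

def taylorShiftCoeff (a : ℂ) (p s : ℕ) : ℂ := a ^ (p - s) * p.choose s

noncomputable def expMul (α : ℂ) (n : ℕ) (u : ℕ → ℂ) (m : ℕ) : ℂ :=
  ∑ p ∈ range (n + 1), expMulCoeff α p m * u p

def taylorShift (a : ℂ) (n : ℕ) (u : ℕ → ℂ) (s : ℕ) : ℂ :=
  ∑ p ∈ range (n + 1), taylorShiftCoeff a p s * u p

lemma taylorShiftCoeff_eq_zero_of_lt (a : ℂ) {p s : ℕ} (h : p < s) :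
    taylorShiftCoeff a p s = 0 := by
  simp [taylorShiftCoeff, Nat.choose_eq_zero_of_lt h]

open Polynomial in
lemma taylorShift_eq_coeff (a : ℂ) (n : ℕ) (u : ℕ → ℂ) (s : ℕ) :
    taylorShift a n u s = (∑ p ∈ range (n + 1), C (u p) * (X + C a) ^ p).coeff s := by
  simp only [taylorShift, finsetSum_coeff, coeff_C_mul, coeff_X_add_C_pow, taylorShiftCoeff]
  exact sum_congr rfl fun p _ => mul_comm _ _

open Polynomial in
lemma taylorShift_taylorShiftCoeff (a b : ℂ) (n s : ℕ) :
    taylorShift a n (taylorShiftCoeff b n) s = taylorShiftCoeff (a + b) n s := by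
  have hpoly : ∑ p ∈ range (n + 1), C (taylorShiftCoeff b n p) * (X + C a) ^ p
      = (X + C (a + b)) ^ n := by
    rw [C_add, ← add_assoc, add_pow]
    refine sum_congr rfl fun p _ => ?_
    simp only [taylorShiftCoeff, C_mul, C_pow, ← map_natCast C]
    ring
  rw [taylorShift_eq_coeff, hpoly, coeff_X_add_C_pow, taylorShiftCoeff]

lemma hasSum_expMulCoeff_mul_conj_add (α : ℂ) (p d : ℕ) :
    HasSum (fun m => (m ! : ℂ) * expMulCoeff α p m * conj (expMulCoeff α (p + d) m))
      (Real.exp (‖α‖ ^ 2) * ∑ s ∈ range (p + 1),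
        (s ! : ℂ) * taylorShiftCoeff (conj α) p s
          * conj (taylorShiftCoeff (conj α) (p + d) s)) := by
  rw [← hasSum_nat_add_iff' (p + d)]
  have hvanish : ∑ m ∈ range (p + d),
      (m ! : ℂ) * expMulCoeff α p m * conj (expMulCoeff α (p + d) m) = 0 :=
    sum_eq_zero fun m hm => by simp [expMulCoeff, not_le.2 (mem_range.1 hm)]
  have hshift (s : ℕ) : ((s + (p + d))! : ℂ) * expMulCoeff α p (s + (p + d))
      * conj (expMulCoeff α (p + d) (s + (p + d)))
      = α ^ d * (((s + p + d)! : ℂ) / ((s + d)! * s !) * (α * conj α) ^ s) := by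
    simp only [expMulCoeff, if_pos (by omega : p ≤ s + (p + d)), le_add_self, if_true,
      show s + (p + d) - p = s + d by omega, Nat.add_sub_cancel, map_div₀, map_pow, map_natCast]
    rw [mul_pow, pow_add, ← add_assoc]
    field_simp
  have hval : α ^ d * (Complex.exp (α * conj α) * ∑ j ∈ range (p + 1),
        (j ! * p.choose j * (p + d).choose j : ℂ) * (α * conj α) ^ (p - j))
      = Real.exp (‖α‖ ^ 2) * ∑ s ∈ range (p + 1),
        (s ! : ℂ) * taylorShiftCoeff (conj α) p s * conj (taylorShiftCoeff (conj α) (p + d) s) := by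
    rw [Complex.mul_conj', ← Complex.ofReal_pow, ← Complex.ofReal_exp, mul_left_comm, mul_sum]
    congr 1
    refine sum_congr rfl fun s hs => ?_
    have hsp : s ≤ p := Nat.lt_succ_iff.1 (mem_range.1 hs)
    simp only [taylorShiftCoeff, map_mul, map_pow, map_natCast, Complex.conj_conj,
      show p + d - s = (p - s) + d by omega, pow_add]
    rw [Complex.ofReal_pow, ← Complex.mul_conj']
    ring
  simp only [hvanish, sub_zero, hshift, ← hval]
  exact (hasSum_factorial_div_mul_pow p d _).mul_left _

lemma hasSum_expMulCoeff_mul_conj (α : ℂ) {p p' N : ℕ} (hp : p < N) (hp' : p' < N) :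
    HasSum (fun m => (m ! : ℂ) * expMulCoeff α p m * conj (expMulCoeff α p' m))
      (Real.exp (‖α‖ ^ 2) * ∑ s ∈ range N,
        (s ! : ℂ) * taylorShiftCoeff (conj α) p s * conj (taylorShiftCoeff (conj α) p' s)) := by
  rcases le_total p p' with hle | hle
  · obtain ⟨d, rfl⟩ := Nat.exists_eq_add_of_le hle
    convert hasSum_expMulCoeff_mul_conj_add α p d using 2
    refine (sum_subset (range_subset_range.2 hp) fun s _ hs => ?_).symm
    rw [taylorShiftCoeff_eq_zero_of_lt _ (by simpa using hs), mul_zero, zero_mul]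
  · obtain ⟨d, rfl⟩ := Nat.exists_eq_add_of_le hle
    rw [← Complex.hasSum_conj']
    convert hasSum_expMulCoeff_mul_conj_add α p' d using 1
    · ext m
      simp only [map_mul, map_natCast, Complex.conj_conj]
      ring
    · rw [map_mul, Complex.conj_ofReal, map_sum]
      congr 1
      refine (sum_subset (range_subset_range.2 hp') fun s _ hs => ?_).symm.trans
        (sum_congr rfl fun s _ => ?_)
      · simp [taylorShiftCoeff_eq_zero_of_lt _ (by simpa using hs : p' < s)]
      · simp only [map_mul, map_natCast, Complex.conj_conj]
        ring

theorem hasSum_factorial_mul_norm_expMul_sq (α : ℂ) (n : ℕ) (u : ℕ → ℂ) :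
    HasSum (fun m => (m ! : ℝ) * ‖expMul α n u m‖ ^ 2)
      (Real.exp (‖α‖ ^ 2) *
        ∑ s ∈ range (n + 1), (s ! : ℝ) * ‖taylorShift (conj α) n u s‖ ^ 2) := by
  have key := hasSum_mul_sum_mul_conj_sum (range (n + 1)) (fun m => (m ! : ℂ)) (expMulCoeff α)
    u _ fun p hp p' hp' => hasSum_expMulCoeff_mul_conj α (mem_range.1 hp) (mem_range.1 hp')
  rw [← Complex.hasSum_ofReal]
  convert key using 1
  · ext m
    push_cast
    rw [mul_assoc, Complex.mul_conj', expMul]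
  · rw [Complex.ofReal_mul, Complex.ofReal_sum, mul_sum]
    simp only [Complex.ofReal_mul, Complex.ofReal_pow, Complex.ofReal_natCast,
      ← Complex.mul_conj', taylorShift, map_sum, map_mul, mul_sum, sum_mul]
    rw [sum_congr rfl fun s _ => sum_comm, sum_comm]
    refine sum_congr rfl fun i _ => ?_
    rw [sum_comm]
    exact sum_congr rfl fun j _ => sum_congr rfl fun s _ => by ring

lemma exp_mul_Dmat (β : ℂ) (t : ℝ) (m n : ℕ) :
    (Real.exp (t * (m - n)) : ℂ) * Dmat β m n
      = (Real.exp (-‖β‖ ^ 2 / 2) * √(m ! : ℝ) / √(n ! : ℝ) : ℝ)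
        * expMul (Real.exp t * β) n (taylorShiftCoeff (-(Real.exp (-t) * conj β)) n) m := by
  rw [Dmat, expMul, ← sum_range_reflect, mul_left_comm, mul_sum, mul_sum, mul_sum]
  refine sum_congr rfl fun p hp => ?_
  have hpn : p ≤ n := Nat.lt_succ_iff.1 (mem_range.1 hp)
  rw [show n + 1 - 1 - p = n - p by omega, show n - (n - p) = p by omega, expMulCoeff]
  split_ifs with hpm
  · have hexp : (Real.exp (t * (m - n)) : ℂ)
        = (Real.exp t : ℂ) ^ (m - p) * (Real.exp (-t) : ℂ) ^ (n - p) := by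
      rw [← Complex.ofReal_pow, ← Complex.ofReal_pow, ← Complex.ofReal_mul, ← Real.exp_nat_mul,
        ← Real.exp_nat_mul, ← Real.exp_add, Nat.cast_sub hpm, Nat.cast_sub hpn]
      ring_nf
    have hsqrt : √((n ! : ℝ) * m !) = √(n ! : ℝ) * √(m ! : ℝ) := Real.sqrt_mul (by positivity) _
    have hsq : (√(n ! : ℝ) : ℂ) ^ 2 = n ! := by
      rw [← Complex.ofReal_pow, Real.sq_sqrt (by positivity), Complex.ofReal_natCast]
    have hne : (√(n ! : ℝ) : ℂ) ≠ 0 := by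
      rw [Complex.ofReal_ne_zero]
      positivity
    rw [hexp, taylorShiftCoeff, Nat.cast_choose ℂ hpn, hsqrt]
    push_cast
    field_simp
    rw [hsq]
    ring
  · simp

lemma exp_mul_norm_Dmat_sq (β : ℂ) (t : ℝ) (m n : ℕ) :
    Real.exp (2 * t * (m - n)) * ‖Dmat β m n‖ ^ 2
      = Real.exp (-‖β‖ ^ 2) / n ! * (m ! *
        ‖expMul (Real.exp t * β) n (taylorShiftCoeff (-(Real.exp (-t) * conj β)) n) m‖ ^ 2) := by
  have h := congrArg (‖·‖ ^ 2) (exp_mul_Dmat β t m n)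
  simp only [norm_mul, norm_div, Complex.norm_real, Real.norm_eq_abs, mul_pow, div_pow, sq_abs,
    Real.sq_sqrt (Nat.cast_nonneg _)] at h
  rw [show 2 * t * (m - n) = ((2 : ℕ) : ℝ) * (t * (m - n)) by push_cast; ring,
    show -‖β‖ ^ 2 = ((2 : ℕ) : ℝ) * (-‖β‖ ^ 2 / 2) by push_cast; ring, Real.exp_nat_mul,
    Real.exp_nat_mul, h]
  ring

lemma norm_taylorShift_taylorShiftCoeff_sq (β : ℂ) (t : ℝ) (n s : ℕ) :
    ‖taylorShift (conj (Real.exp t * β)) n (taylorShiftCoeff (-(Real.exp (-t) * conj β)) n) s‖ ^ 2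
      = (‖β‖ ^ 2 * (Real.exp t - Real.exp (-t)) ^ 2) ^ (n - s) * n.choose s ^ 2 := by
  have hδ : conj (Real.exp t * β) + -(Real.exp (-t) * conj β)
      = (Real.exp t - Real.exp (-t) : ℝ) * conj β := by
    simp only [map_mul, Complex.conj_ofReal]
    push_cast
    ring
  rw [taylorShift_taylorShiftCoeff, taylorShiftCoeff, hδ, norm_mul, norm_pow, norm_mul,
    Complex.norm_real, Complex.norm_conj, Real.norm_eq_abs, Complex.norm_natCast,
    ← sq_abs (Real.exp t - _)]
  ring

noncomputable def laguerre (n : ℕ) (x : ℝ) : ℝ :=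
  ∑ k ∈ range (n + 1), n.choose k * (-x) ^ k / k !

lemma laguerre_neg_eq_sum (n : ℕ) (x : ℝ) :
    laguerre n (-x) = ∑ s ∈ range (n + 1), s ! * (x ^ (n - s) * n.choose s ^ 2) / n ! := by
  rw [laguerre, ← sum_range_reflect]
  refine sum_congr rfl fun s hs => ?_
  have hsn : s ≤ n := Nat.lt_succ_iff.1 (mem_range.1 hs)
  rw [show n + 1 - 1 - s = n - s by omega, neg_neg, Nat.choose_symm hsn, Nat.cast_choose ℝ hsn]
  field_simp [Nat.factorial_ne_zero]

theorem hasSum_exp_mul_norm_Dmat_sq (β : ℂ) (t : ℝ) (n : ℕ) :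
    HasSum (fun m : ℕ => Real.exp (2 * t * (m - n)) * ‖Dmat β m n‖ ^ 2)
      (Real.exp ((Real.exp (2 * t) - 1) * ‖β‖ ^ 2)
        * laguerre n (-(‖β‖ ^ 2 * (Real.exp t - Real.exp (-t)) ^ 2))) := by
  have key := (hasSum_factorial_mul_norm_expMul_sq (Real.exp t * β) n
    (taylorShiftCoeff (-(Real.exp (-t) * conj β)) n)).mul_left (Real.exp (-‖β‖ ^ 2) / n !)
  have hnorm : ‖(Real.exp t : ℂ) * β‖ ^ 2 = Real.exp (2 * t) * ‖β‖ ^ 2 := by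
    rw [norm_mul, Complex.norm_real, Real.norm_of_nonneg (Real.exp_pos t).le, mul_pow,
      ← Real.exp_nat_mul]
    norm_num
  have hexp : Real.exp ((Real.exp (2 * t) - 1) * ‖β‖ ^ 2)
      = Real.exp (-‖β‖ ^ 2) * Real.exp (Real.exp (2 * t) * ‖β‖ ^ 2) := by
    rw [← Real.exp_add]
    ring_nf
  simp only [← exp_mul_norm_Dmat_sq, hnorm, norm_taylorShift_taylorShiftCoeff_sq] at key
  set x := ‖β‖ ^ 2 * (Real.exp t - Real.exp (-t)) ^ 2
  have hval : Real.exp (-‖β‖ ^ 2) / n ! * (Real.exp (Real.exp (2 * t) * ‖β‖ ^ 2)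
        * ∑ s ∈ range (n + 1), s ! * (x ^ (n - s) * n.choose s ^ 2))
      = Real.exp ((Real.exp (2 * t) - 1) * ‖β‖ ^ 2) * laguerre n (-x) := by
    rw [laguerre_neg_eq_sum, hexp, mul_sum, mul_sum, mul_sum]
    exact sum_congr rfl fun s _ => by ring
  rwa [hval] at key

lemma laguerre_neg_le_exp (n : ℕ) {x : ℝ} (hx : 0 ≤ x) : laguerre n (-x) ≤ Real.exp (n * x) := by
  calc laguerre n (-x) = ∑ k ∈ range (n + 1), n.choose k * x ^ k / k ! := by
        simp only [laguerre, neg_neg]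
    _ ≤ ∑ k ∈ range (n + 1), (n * x) ^ k / k ! := by
        refine sum_le_sum fun k _ => ?_
        rw [mul_pow]
        gcongr
        exact_mod_cast Nat.choose_le_pow n k
    _ ≤ Real.exp (n * x) := Real.sum_le_exp_of_nonneg (by positivity) _

lemma sq_exp_sub_exp_neg_le (x : ℝ) :
    (Real.exp x - Real.exp (-x)) ^ 2 ≤ 4 * x ^ 2 * Real.exp (2 * |x|) := by
  have heven : (Real.exp x - Real.exp (-x)) ^ 2 = (Real.exp |x| - Real.exp (-|x|)) ^ 2 := by
    rcases abs_choice x with h | h <;> rw [h]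
    rw [neg_neg]
    ring
  set a := |x|
  have ha : 0 ≤ a := abs_nonneg x
  have hlow : 0 ≤ Real.exp a - Real.exp (-a) := by
    linarith [Real.exp_le_exp.2 (neg_le_self ha)]
  -- `e^a - e^{-a} = e^a (1 - e^{-2a})` and `1 - e^{-2a} ≤ 2a`.
  have hup : Real.exp a - Real.exp (-a) ≤ 2 * a * Real.exp a := by
    have h1 : Real.exp (-a) = Real.exp a * Real.exp (-(2 * a)) := by
      rw [← Real.exp_add]
      ring_nf
    nlinarith [Real.add_one_le_exp (-(2 * a)), Real.exp_pos a]
  calc (Real.exp x - Real.exp (-x)) ^ 2 ≤ (2 * a * Real.exp a) ^ 2 := by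
        rw [heven]
        exact pow_le_pow_left₀ hlow hup 2
    _ = 4 * x ^ 2 * Real.exp (2 * a) := by
        rw [mul_pow, mul_pow, ← Real.exp_nat_mul, sq_abs]
        norm_num

lemma exp_mul_laguerre_le (β : ℂ) (n : ℕ) {μ t : ℝ} (ht : |t| ≤ μ) (hnt : n * t ^ 2 ≤ μ ^ 2) :
    Real.exp ((Real.exp (2 * t) - 1) * ‖β‖ ^ 2)
        * laguerre n (-(‖β‖ ^ 2 * (Real.exp t - Real.exp (-t)) ^ 2))
      ≤ Real.exp ((1 + 4 * μ ^ 2) * Real.exp (2 * μ) * ‖β‖ ^ 2) := by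
  have hexp : Real.exp (2 * t) ≤ Real.exp (2 * μ) :=
    Real.exp_le_exp.2 (by linarith [le_abs_self t])
  have hexp' : Real.exp (2 * |t|) ≤ Real.exp (2 * μ) := Real.exp_le_exp.2 (by linarith)
  have hsinh : n * (‖β‖ ^ 2 * (Real.exp t - Real.exp (-t)) ^ 2)
      ≤ 4 * μ ^ 2 * Real.exp (2 * μ) * ‖β‖ ^ 2 := by
    calc n * (‖β‖ ^ 2 * (Real.exp t - Real.exp (-t)) ^ 2)
        ≤ n * (‖β‖ ^ 2 * (4 * t ^ 2 * Real.exp (2 * μ))) := by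
          gcongr
          exact (sq_exp_sub_exp_neg_le t).trans (by gcongr)
      _ = 4 * (n * t ^ 2) * Real.exp (2 * μ) * ‖β‖ ^ 2 := by ring
      _ ≤ 4 * μ ^ 2 * Real.exp (2 * μ) * ‖β‖ ^ 2 := by gcongr
  calc Real.exp ((Real.exp (2 * t) - 1) * ‖β‖ ^ 2)
        * laguerre n (-(‖β‖ ^ 2 * (Real.exp t - Real.exp (-t)) ^ 2))
      ≤ Real.exp ((Real.exp (2 * t) - 1) * ‖β‖ ^ 2)
        * Real.exp (n * (‖β‖ ^ 2 * (Real.exp t - Real.exp (-t)) ^ 2)) := by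
        gcongr
        exact laguerre_neg_le_exp n (by positivity)
    _ ≤ Real.exp ((1 + 4 * μ ^ 2) * Real.exp (2 * μ) * ‖β‖ ^ 2) := by
        rw [← Real.exp_add, Real.exp_le_exp]
        nlinarith [sq_nonneg ‖β‖]

lemma abs_sqrt_sub_sqrt_mul_sqrt_succ_le (m n : ℕ) :
    |√(m : ℝ) - √(n : ℝ)| * √((n : ℝ) + 1) ≤ 2 * |(m : ℝ) - n| := by
  rcases eq_or_ne m n with rfl | hmn
  · simp
  have hm := Real.sq_sqrt (Nat.cast_nonneg (α := ℝ) m)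
  have hn := Real.sq_sqrt (Nat.cast_nonneg (α := ℝ) n)
  have hmn' : (1 : ℝ) ≤ m + n := by exact_mod_cast (by omega : 1 ≤ m + n)
  have hroot : √((n : ℝ) + 1) ≤ 2 * (√(m : ℝ) + √(n : ℝ)) := by
    rw [Real.sqrt_le_left (by positivity)]
    nlinarith [mul_nonneg (Real.sqrt_nonneg (m : ℝ)) (Real.sqrt_nonneg (n : ℝ))]
  have hdiff : |(m : ℝ) - n| = |√(m : ℝ) - √(n : ℝ)| * (√(m : ℝ) + √(n : ℝ)) := by
    rw [← abs_of_nonneg (by positivity : 0 ≤ √(m : ℝ) + √(n : ℝ)), ← abs_mul]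
    congr 1
    nlinarith
  rw [hdiff]
  nlinarith [mul_le_mul_of_nonneg_left hroot (abs_nonneg (√(m : ℝ) - √(n : ℝ)))]

lemma exp_mul_abs_sqrt_sub_sqrt_le {μ : ℝ} (hμ : 0 ≤ μ) (m n : ℕ) :
    Real.exp (μ * |√(m : ℝ) - √(n : ℝ)|)
      ≤ Real.exp (2 * (μ / √((n : ℝ) + 1)) * (m - n))
        + Real.exp (2 * (-(μ / √((n : ℝ) + 1))) * (m - n)) := by
  set t := μ / √((n : ℝ) + 1)
  calc Real.exp (μ * |√(m : ℝ) - √(n : ℝ)|) ≤ Real.exp |2 * t * (m - n)| := by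
        rw [Real.exp_le_exp, abs_mul, abs_mul, abs_two, abs_of_nonneg (by positivity : 0 ≤ t),
          show 2 * t * |(m : ℝ) - n| = μ * (2 * |(m : ℝ) - n|) / √((n : ℝ) + 1) by ring,
          le_div_iff₀ (by positivity), mul_assoc]
        exact mul_le_mul_of_nonneg_left (abs_sqrt_sub_sqrt_mul_sqrt_succ_le m n) hμ
    _ ≤ Real.exp (2 * t * (m - n)) + Real.exp (-(2 * t * (m - n))) := Real.exp_abs_le _
    _ = Real.exp (2 * t * (m - n)) + Real.exp (2 * (-t) * (m - n)) := by ring_nf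

/-- For any β ∈ ℂ and μ > 0, sup_n ∑_m e^{μ|√m−√n|}|⟨m|D(β)|n⟩|² < ∞. -/
theorem stmt6 (β : ℂ) (μ : ℝ) (hμ : 0 < μ) :
    ∃ C : ℝ, ∀ n : ℕ,
      ∑' m : ℕ, Real.exp (μ * |Real.sqrt m - Real.sqrt n|) * ‖Dmat β m n‖ ^ 2
        ≤ C := by
  refine ⟨2 * Real.exp ((1 + 4 * μ ^ 2) * Real.exp (2 * μ) * ‖β‖ ^ 2), fun n => ?_⟩
  set t := μ / √((n : ℝ) + 1)
  have hroot : 1 ≤ √((n : ℝ) + 1) := Real.one_le_sqrt.2 (by linarith [n.cast_nonneg (α := ℝ)])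
  have ht : |t| ≤ μ := by
    rw [abs_of_nonneg (by positivity)]
    exact div_le_self hμ.le hroot
  have hnt : n * t ^ 2 ≤ μ ^ 2 := by
    rw [div_pow, Real.sq_sqrt (by positivity), mul_div_assoc']
    exact div_le_of_le_mul₀ (by positivity) (by positivity) (by nlinarith)
  have hsum := (hasSum_exp_mul_norm_Dmat_sq β t n).add (hasSum_exp_mul_norm_Dmat_sq β (-t) n)
  have hbound := add_le_add (exp_mul_laguerre_le β n ht hnt)
    (exp_mul_laguerre_le β n (μ := μ) (by rwa [abs_neg]) (by rwa [neg_sq]))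
  have hle (m : ℕ) : Real.exp (μ * |√(m : ℝ) - √(n : ℝ)|) * ‖Dmat β m n‖ ^ 2
      ≤ Real.exp (2 * t * (m - n)) * ‖Dmat β m n‖ ^ 2
        + Real.exp (2 * (-t) * (m - n)) * ‖Dmat β m n‖ ^ 2 := by
    rw [← add_mul]
    exact mul_le_mul_of_nonneg_right (exp_mul_abs_sqrt_sub_sqrt_le hμ.le m n) (by positivity)
  have hsummable := hsum.summable.of_nonneg_of_le (fun m => by positivity) hle
  linarith [hasSum_le hle hsummable.hasSum hsum]
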